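/- Let W ∈ L(H) be a positive operator and A, B ∈ L(H) operators with closed range such that ker B = ker(A*W), and let T be the shorted operator of W to range A. Assume the pair (W, ker T) is compatible and that the subspace range A + W^{-1}((range A)^⊥) is closed. Then T is the infimum, with respect to the minus order, of the set {(AXB − I)*W(AXB − I) : X ∈ L(H)}: T ⁻≤ (AXB − I)*W(AXB − I) for every X ∈ L(H), and every D ∈ L(H) satisfying D ⁻≤ (AXB − I)*W(AXB − I) for all X ∈ L(H) satisfies D ⁻≤ T. -/

import Mathlib

open ContinuousLinearMap
open scoped ComplexInnerProductSpace

noncomputable section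

variable {H : Type*} [NormedAddCommGroup H] [InnerProductSpace ℂ H] [CompleteSpace H]

/-- `M(W,S)`: the set of operators `X` with `0 ≤ X ≤ W` (Loewner order) and `range X ⊆ S^⊥`. -/
def MSet (W : H →L[ℂ] H) (S : Submodule ℂ H) : Set (H →L[ℂ] H) :=
  {X | X.IsPositive ∧ (W - X).IsPositive ∧ LinearMap.range (X : H →ₗ[ℂ] H) ≤ Sᗮ}

/-- `T` is the shorted operator of `W` to `S`, i.e. the maximum of `M(W,S)` in the Loewner
order. -/
def IsShorted (W : H →L[ℂ] H) (S : Submodule ℂ H) (T : H →L[ℂ] H) : Prop :=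
  T ∈ MSet W S ∧ ∀ X ∈ MSet W S, (T - X).IsPositive

/-- The minus order: `A ⁻≤ B` iff there are bounded idempotents `P, Q` with `A = PB` and
`A* = QB*`. -/
def MinusLE (A B : H →L[ℂ] H) : Prop :=
  ∃ P Q : H →L[ℂ] H, IsIdempotentElem P ∧ IsIdempotentElem Q ∧
    A = P ∘L B ∧ adjoint A = Q ∘L adjoint B

/-- The pair `(W, N)` is compatible: there is a bounded idempotent `Q` with range `N` such that
`WQ` is selfadjoint. -/
def Compatible (W : H →L[ℂ] H) (N : Submodule ℂ H) : Prop :=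
  ∃ Q : H →L[ℂ] H, IsIdempotentElem Q ∧ LinearMap.range (Q : H →ₗ[ℂ] H) = N ∧ IsSelfAdjoint (W ∘L Q)

/-- `M⁻(W,S)`: operators `X` with `X ⁻≤ W`, `range X ⊆ S^⊥` and `range X* ⊆ S^⊥`. -/
def MMinusSet (W : H →L[ℂ] H) (S : Submodule ℂ H) : Set (H →L[ℂ] H) :=
  {X | MinusLE X W ∧ LinearMap.range (X : H →ₗ[ℂ] H) ≤ Sᗮ ∧ LinearMap.range (adjoint X : H →ₗ[ℂ] H) ≤ Sᗮ}

/-- `X₀` is a `W`-inverse of `M` in `R(C)`: for every `x`, `X₀ x` is a `W`-weighted least squares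
solution of `M z = C x`. -/
def WInverseIn (W M C X₀ : H →L[ℂ] H) : Prop :=
  ∀ x z : H, (⟪W (M (X₀ x) - C x), M (X₀ x) - C x⟫).re ≤ (⟪W (M z - C x), M z - C x⟫).re

/-- The left weighted star order `A ₋*_W≤ B`. -/
def LStarW (W A B : H →L[ℂ] H) : Prop :=
  LinearMap.range (B : H →ₗ[ℂ] H) = LinearMap.range (A : H →ₗ[ℂ] H) ⊔ LinearMap.range (B - A : H →ₗ[ℂ] H) ∧
  LinearMap.range (A : H →ₗ[ℂ] H) ⊓ LinearMap.range (B - A : H →ₗ[ℂ] H) = ⊥ ∧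
  LinearMap.range (B - A : H →ₗ[ℂ] H) ≤ LinearMap.ker (adjoint A ∘L W : H →ₗ[ℂ] H)

/-- The right weighted star order `A ≤*_W B`. -/
def RStarW (W A B : H →L[ℂ] H) : Prop :=
  LinearMap.range (adjoint B : H →ₗ[ℂ] H) =
    LinearMap.range (adjoint A : H →ₗ[ℂ] H) ⊔ LinearMap.range (adjoint B - adjoint A : H →ₗ[ℂ] H) ∧
  LinearMap.range (adjoint A : H →ₗ[ℂ] H) ⊓ LinearMap.range (adjoint B - adjoint A : H →ₗ[ℂ] H) = ⊥ ∧
  LinearMap.range (adjoint B - adjoint A : H →ₗ[ℂ] H) ≤ LinearMap.ker (A ∘L W : H →ₗ[ℂ] H)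

/-- The weighted star order `A *_W≤ B`. -/
def StarW (W A B : H →L[ℂ] H) : Prop :=
  LStarW W A B ∧ RStarW W A B

/-!
Compatibility of `(W, ker T)` gives an idempotent `R` onto `ker T` with `WR` selfadjoint. Then
`W(1 - R) = (1 - R)* W (1 - R)` lies in `M(W, range A)`, while conjugating `T ≤ W` by `1 - R` gives
`T ≤ W(1 - R)`; hence `T = W(1 - R)`. As `ker B = ker A*W` and `A*T = 0`, `B(1 - R) = 0`, so every
`E_X = (AXB - I)* W (AXB - I)` satisfies `E_X (1 - R) = T`, i.e. `T = (1 - R)* E_X`.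

Conversely, let `D ⁻≤ E_X` for all `X`. Taking `X = 0` gives `D = PW` with `P` idempotent, and
rank-one choices of `X` make `E_X` vanish on `range A`, so `D` kills `range A`. Comparing `T` with
Anderson–Trapp's `W^{1/2} Π W^{1/2}` (`Π` the projection onto `(W^{1/2} range A)ᗮ`) shows that `W`
maps `ker T` into the closure of `W(range A)`, which `P` kills; thus `D` kills `ker T = range R`
and `D = D(1 - R) = PT`. The same argument applies to `D*`.
-/

open scoped ComplexOrder

section StarRing

variable {𝔄 : Type*} [Ring 𝔄] [StarRing 𝔄] {w r : 𝔄}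

lemma star_mul_eq_mul_of_isSelfAdjoint_mul (hw : IsSelfAdjoint w) (hwr : IsSelfAdjoint (w * r)) :
    star r * w = w * r := by
  simpa only [star_mul, hw.star_eq] using hwr.star_eq

lemma star_mul_mul_one_sub_eq_zero (hw : IsSelfAdjoint w) (hr : IsIdempotentElem r)
    (hwr : IsSelfAdjoint (w * r)) : star r * w * (1 - r) = 0 := by
  rw [star_mul_eq_mul_of_isSelfAdjoint_mul hw hwr, mul_assoc, mul_sub, mul_one, hr.eq, sub_self,
    mul_zero]

lemma star_mul_mul_self_eq_mul (hw : IsSelfAdjoint w) (hr : IsIdempotentElem r)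
    (hwr : IsSelfAdjoint (w * r)) : star r * w * r = w * r := by
  rw [star_mul_eq_mul_of_isSelfAdjoint_mul hw hwr, mul_assoc, hr.eq]

lemma star_one_sub_mul_mul_one_sub_eq_mul (hw : IsSelfAdjoint w) (hr : IsIdempotentElem r)
    (hwr : IsSelfAdjoint (w * r)) : star (1 - r) * w * (1 - r) = w * (1 - r) := by
  rw [star_sub, star_one, sub_mul, sub_mul, one_mul, star_mul_mul_one_sub_eq_zero hw hr hwr,
    sub_zero]

end StarRing

namespace ContinuousLinearMap

lemma sqrt_comp_sqrt {W : H →L[ℂ] H} (hW : W.IsPositive) : CFC.sqrt W ∘L CFC.sqrt W = W :=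
  CFC.sqrt_mul_sqrt_self W ((nonneg_iff_isPositive W).2 hW)

lemma adjoint_sqrt (W : H →L[ℂ] H) : adjoint (CFC.sqrt W) = CFC.sqrt W :=
  (IsSelfAdjoint.of_nonneg (CFC.sqrt_nonneg W)).adjoint_eq

lemma IsPositive.apply_eq_zero_of_inner_self_eq_zero {W : H →L[ℂ] H} (hW : W.IsPositive) {x : H}
    (hx : ⟪W x, x⟫ = 0) : W x = 0 := by
  have hKx : CFC.sqrt W x = 0 := by
    rw [← inner_self_eq_zero (𝕜 := ℂ), ← adjoint_inner_left, adjoint_sqrt, ← comp_apply,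
      sqrt_comp_sqrt hW, hx]
  rw [← sqrt_comp_sqrt hW, comp_apply, hKx, map_zero]

lemma apply_eq_zero_of_le {X T : H →L[ℂ] H} (hX : 0 ≤ X) (hXT : X ≤ T) {u : H} (hu : T u = 0) :
    X u = 0 := by
  rw [nonneg_iff_isPositive] at hX
  refine hX.apply_eq_zero_of_inner_self_eq_zero (le_antisymm ?_ (hX.inner_nonneg_left u))
  have := ((le_def X T).1 hXT).inner_nonneg_left u
  rwa [sub_apply, hu, zero_sub, inner_neg_left, neg_nonneg] at this

lemma adjoint_comp_eq_zero_of_range_le {A T : H →L[ℂ] H} (h : T.range ≤ A.rangeᗮ) :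
    adjoint A ∘L T = 0 := by
  ext x
  have := h (LinearMap.mem_range_self _ x)
  rwa [orthogonal_range] at this

end ContinuousLinearMap

section Shorted

variable {W T R : H →L[ℂ] H} {S : Submodule ℂ H}

section

omit [CompleteSpace H]

lemma mem_MSet_iff {X : H →L[ℂ] H} : X ∈ MSet W S ↔ 0 ≤ X ∧ X ≤ W ∧ X.range ≤ Sᗮ := by
  rw [nonneg_iff_isPositive]
  rfl

lemma IsShorted.le (hT : IsShorted W S T) : T ≤ W := hT.1.2.1

lemma IsShorted.range_le (hT : IsShorted W S T) : T.range ≤ Sᗮ := hT.1.2.2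

lemma IsShorted.le_of_mem (hT : IsShorted W S T) {X : H →L[ℂ] H} (hX : X ∈ MSet W S) : X ≤ T :=
  hT.2 X hX

end

lemma IsShorted.isSelfAdjoint (hT : IsShorted W S T) : IsSelfAdjoint T := hT.1.1.isSelfAdjoint

lemma IsShorted.le_ker (hT : IsShorted W S T) : S ≤ T.ker := fun s hs =>
  hT.1.1.apply_eq_zero_of_inner_self_eq_zero
    (Submodule.inner_left_of_mem_orthogonal hs (hT.range_le (LinearMap.mem_range_self _ s)))

lemma comp_one_sub_mem_MSet (hW : W.IsPositive) (hR : IsIdempotentElem R)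
    (hWR : IsSelfAdjoint (W ∘L R)) (hS : S ≤ R.range) : W ∘L (1 - R) ∈ MSet W S := by
  have hWsa : IsSelfAdjoint W := hW.isSelfAdjoint
  refine mem_MSet_iff.2 ⟨?_, ?_, ?_⟩
  · rw [← mul_def, ← star_one_sub_mul_mul_one_sub_eq_mul hWsa hR hWR]
    exact star_left_conjugate_nonneg ((nonneg_iff_isPositive W).2 hW) _
  · rw [← sub_nonneg, ← mul_def, mul_sub, mul_one, sub_sub_cancel,
      ← star_mul_mul_self_eq_mul hWsa hR hWR]
    exact star_left_conjugate_nonneg ((nonneg_iff_isPositive W).2 hW) _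
  · rintro _ ⟨x, rfl⟩
    rw [Submodule.mem_orthogonal]
    intro s hs
    obtain ⟨y, rfl⟩ := hS hs
    change ⟪R y, (W ∘L (1 - R)) x⟫ = 0
    rw [← adjoint_inner_right, ← star_eq_adjoint]
    change ⟪y, (star R * W * (1 - R)) x⟫ = 0
    rw [star_mul_mul_one_sub_eq_zero hWsa hR hWR, zero_apply, inner_zero_right]

lemma IsShorted.eq_comp_one_sub (hW : W.IsPositive) (hT : IsShorted W S T)
    (hR : IsIdempotentElem R) (hRT : R.range = T.ker) (hWR : IsSelfAdjoint (W ∘L R)) :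
    T = W ∘L (1 - R) := by
  have hTR : T * R = 0 := ext fun x =>
    (hRT ▸ LinearMap.mem_range_self (R : H →ₗ[ℂ] H) x : R x ∈ T.ker)
  have hTR' : T * (1 - R) = T := by rw [mul_sub, mul_one, hTR, sub_zero]
  refine le_antisymm ?_ (hT.le_of_mem (comp_one_sub_mem_MSet hW hR hWR (hT.le_ker.trans hRT.ge)))
  calc T = star (1 - R) * T * (1 - R) := by
        rw [mul_assoc, hTR', ← hT.isSelfAdjoint.star_eq, ← star_mul, hTR']
    _ ≤ star (1 - R) * W * (1 - R) := star_left_conjugate_le_conjugate hT.le _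
    _ = W ∘L (1 - R) := star_one_sub_mul_mul_one_sub_eq_mul hW.isSelfAdjoint hR hWR

/-- With `Π` the projection onto `(W^{1/2} S)ᗮ`, the Gram operator `W^{1/2} Π W^{1/2}` of
`shortingFactor W S` is Anderson–Trapp's formula for the shorted operator of `W` to `S`. -/
def shortingFactor (W : H →L[ℂ] H) (S : Submodule ℂ H) : H →L[ℂ] H :=
  (S.map ((CFC.sqrt W : H →L[ℂ] H) : H →ₗ[ℂ] H))ᗮ.starProjection ∘L CFC.sqrt W

lemma adjoint_shortingFactor_comp_mem_MSet (hW : W.IsPositive) :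
    adjoint (shortingFactor W S) ∘L shortingFactor W S ∈ MSet W S := by
  set K := CFC.sqrt W
  set Q := (S.map (K : H →ₗ[ℂ] H))ᗮ.starProjection
  have hQ : IsStarProjection Q := isStarProjection_starProjection
  refine mem_MSet_iff.2 ⟨(nonneg_iff_isPositive _).2 (isPositive_adjoint_comp_self _), ?_, ?_⟩
  · have hK : star K = K := (IsSelfAdjoint.of_nonneg (CFC.sqrt_nonneg W)).star_eq
    have hsplit : W - adjoint (shortingFactor W S) ∘L shortingFactor W S = star K * (1 - Q) * K := by
      change W - star (Q * K) * (Q * K) = _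
      rw [star_mul, hQ.isSelfAdjoint.star_eq, hK, ← sqrt_comp_sqrt hW]
      change K * K - K * Q * (Q * K) = K * (1 - Q) * K
      rw [show K * Q * (Q * K) = K * (Q * Q) * K by noncomm_ring, hQ.isIdempotentElem.eq]
      noncomm_ring
    rw [← sub_nonneg, hsplit]
    exact star_left_conjugate_nonneg hQ.one_sub.nonneg K
  · rintro _ ⟨x, rfl⟩
    rw [Submodule.mem_orthogonal]
    intro s hs
    have hQKs : Q (K s) = 0 := (Submodule.starProjection_apply_eq_zero_iff _).2
      (Submodule.le_orthogonal_orthogonal _ (Submodule.mem_map_of_mem hs))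
    change ⟪s, adjoint (shortingFactor W S) (shortingFactor W S x)⟫ = 0
    rw [adjoint_inner_right]
    change ⟪Q (K s), Q (K x)⟫ = 0
    rw [hQKs, inner_zero_left]

lemma IsShorted.ker_le_comap_closure (hW : W.IsPositive) (hT : IsShorted W S T) :
    T.ker ≤ (S.map (W : H →ₗ[ℂ] H)).topologicalClosure.comap (W : H →ₗ[ℂ] H) := by
  intro u hu
  set K := CFC.sqrt W
  have hMu : u ∈ (shortingFactor W S).ker := by
    rw [← ker_adjoint_comp_self]
    exact apply_eq_zero_of_le ((mem_MSet_iff.1 (adjoint_shortingFactor_comp_mem_MSet hW)).1)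
      (hT.le_of_mem (adjoint_shortingFactor_comp_mem_MSet hW)) hu
  have hKu : K u ∈ (S.map (K : H →ₗ[ℂ] H)).topologicalClosure := by
    rw [← Submodule.orthogonal_orthogonal_eq_closure, ← Submodule.starProjection_apply_eq_zero_iff]
    exact hMu
  have hWu : W u ∈ (S.map (K : H →ₗ[ℂ] H)).topologicalClosure.map (K : H →ₗ[ℂ] H) :=
    ⟨K u, hKu, by rw [coe_coe, ← comp_apply, sqrt_comp_sqrt hW]⟩
  have hKKS : (S.map (K : H →ₗ[ℂ] H)).map (K : H →ₗ[ℂ] H) = S.map (W : H →ₗ[ℂ] H) := by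
    rw [← Submodule.map_comp, ← toLinearMap_comp, sqrt_comp_sqrt hW]
  exact hKKS ▸ Submodule.topologicalClosure_map K _ hWu

end Shorted

lemma MinusLE.adjoint {D E : H →L[ℂ] H} (h : MinusLE D E) : MinusLE (adjoint D) (adjoint E) := by
  obtain ⟨P, Q, hP, hQ, hDP, hDQ⟩ := h
  exact ⟨Q, P, hQ, hP, hDQ, by rw [adjoint_adjoint, adjoint_adjoint, hDP]⟩

lemma minusLE_of_eq_comp {T E P : H →L[ℂ] H} (hT : IsSelfAdjoint T) (hE : IsSelfAdjoint E)
    (hP : IsIdempotentElem P) (h : T = P ∘L E) : MinusLE T E :=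
  ⟨P, P, hP, hP, h, by rw [hT.adjoint_eq, hE.adjoint_eq]; exact h⟩

def weightedResidual (W A B X : H →L[ℂ] H) : H →L[ℂ] H :=
  adjoint (A ∘L X ∘L B - 1) ∘L (W ∘L (A ∘L X ∘L B - 1))

section WeightedResidual

variable {W A B T R : H →L[ℂ] H}

lemma isSelfAdjoint_weightedResidual (hW : IsSelfAdjoint W) (X : H →L[ℂ] H) :
    IsSelfAdjoint (weightedResidual W A B X) := by
  change IsSelfAdjoint (star (A * X * B - 1) * (W * (A * X * B - 1)))
  rw [← mul_assoc]
  exact hW.conjugate' _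

lemma weightedResidual_zero (W A B : H →L[ℂ] H) : weightedResidual W A B 0 = W := by
  rw [weightedResidual, zero_comp, comp_zero, zero_sub, ← star_eq_adjoint]
  change star (-1) * (W * -1) = W
  simp

lemma weightedResidual_comp_one_sub (hBR : B ∘L (1 - R) = 0) (hAT : adjoint A ∘L T = 0)
    (hTW : T = W ∘L (1 - R)) (X : H →L[ℂ] H) : weightedResidual W A B X ∘L (1 - R) = T := by
  set C := A * X * B - 1
  have hCR : C * (1 - R) = -(1 - R) := by
    rw [sub_mul, one_mul, mul_assoc, show B * (1 - R) = 0 from hBR, mul_zero, zero_sub]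
  have hCT : star C * T = -T := by
    rw [star_sub, star_one, sub_mul, one_mul, star_mul, star_mul, mul_assoc, mul_assoc,
      show star A * T = 0 from hAT, mul_zero, mul_zero, zero_sub]
  change star C * (W * C) * (1 - R) = T
  rw [mul_assoc, mul_assoc, hCR, mul_neg, show W * (1 - R) = T from hTW.symm, mul_neg, hCT,
    neg_neg]

lemma minusLE_weightedResidual (hW : IsSelfAdjoint W) (hT : IsSelfAdjoint T)
    (hR : IsIdempotentElem R) (hBR : B ∘L (1 - R) = 0) (hAT : adjoint A ∘L T = 0)
    (hTW : T = W ∘L (1 - R)) (X : H →L[ℂ] H) : MinusLE T (weightedResidual W A B X) := by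
  have hE := isSelfAdjoint_weightedResidual (A := A) (B := B) hW X
  refine minusLE_of_eq_comp hT hE hR.one_sub.star ?_
  have := congrArg star (weightedResidual_comp_one_sub hBR hAT hTW X)
  rwa [← mul_def, star_mul, hE.star_eq, hT.star_eq, eq_comm] at this

lemma exists_weightedResidual_apply_eq_zero {z : H} (hz : B (A z) ≠ 0) :
    ∃ X, weightedResidual W A B X (A z) = 0 := by
  obtain ⟨f, hf⟩ := SeparatingDual.exists_eq_one (R := ℂ) hz
  have hC : (A ∘L f.smulRight z ∘L B - 1) (A z) = 0 := by
    rw [sub_apply, comp_apply, comp_apply, smulRight_apply, hf, one_smul,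
      one_apply_eq_self, sub_self]
  refine ⟨f.smulRight z, ?_⟩
  rw [weightedResidual, comp_apply, comp_apply, hC, map_zero, map_zero]

lemma comp_eq_zero_of_forall_minusLE (hW : W.IsPositive) (hker : B.ker ≤ (adjoint A ∘L W).ker)
    {D : H →L[ℂ] H} (hD : ∀ X, MinusLE D (weightedResidual W A B X)) : D ∘L A = 0 := by
  ext z
  change D (A z) = 0
  by_cases hz : B (A z) = 0
  · obtain ⟨P, -, -, -, hDP, -⟩ := hD 0
    rw [weightedResidual_zero] at hDP
    have hWAz : W (A z) = 0 := by
      refine hW.apply_eq_zero_of_inner_self_eq_zero ?_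
      rw [← adjoint_inner_left]
      exact (LinearMap.mem_ker.1 (hker hz) : adjoint A (W (A z)) = 0) ▸ inner_zero_left _
    rw [hDP, comp_apply, hWAz, map_zero]
  · obtain ⟨X, hX⟩ := exists_weightedResidual_apply_eq_zero hz
    obtain ⟨P, -, -, -, hDP, -⟩ := hD X
    rw [hDP, comp_apply, hX, map_zero]

lemma exists_eq_comp_of_forall_minusLE (hW : W.IsPositive) (hker : B.ker ≤ (adjoint A ∘L W).ker)
    (hT : IsShorted W A.range T) (hRT : R.range ≤ T.ker) (hTW : T = W ∘L (1 - R))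
    {D : H →L[ℂ] H} (hD : ∀ X, MinusLE D (weightedResidual W A B X)) :
    ∃ P, IsIdempotentElem P ∧ D = P ∘L T := by
  obtain ⟨P, -, hP, -, hDP, -⟩ := hD 0
  rw [weightedResidual_zero] at hDP
  have hPWA : A.range.map (W : H →ₗ[ℂ] H) ≤ P.ker := by
    rintro _ ⟨_, ⟨z, rfl⟩, rfl⟩
    have hDAz : D (A z) = 0 := congr($(comp_eq_zero_of_forall_minusLE hW hker hD) z)
    rwa [hDP] at hDAz
  have hDR : D ∘L R = 0 := by
    ext x
    have hWRx : W (R x) ∈ P.ker := Submodule.topologicalClosure_minimal _ hPWA P.isClosed_ker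
      (hT.ker_le_comap_closure hW (hRT (LinearMap.mem_range_self _ x)))
    rw [comp_apply, hDP]
    exact hWRx
  refine ⟨P, hP, ?_⟩
  calc D = D ∘L (1 - R) := by rw [comp_sub, hDR, sub_zero]; rfl
    _ = P ∘L T := by rw [hDP, hTW, comp_assoc]

end WeightedResidual

theorem stmt8_general (W A B T : H →L[ℂ] H) (hW : W.IsPositive)
    (hker : LinearMap.ker (B : H →ₗ[ℂ] H) = LinearMap.ker (adjoint A ∘L W : H →ₗ[ℂ] H))
    (hT : IsShorted W (LinearMap.range (A : H →ₗ[ℂ] H)) T)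
    (hcomp : Compatible W (LinearMap.ker (T : H →ₗ[ℂ] H))) :
    (∀ X : H →L[ℂ] H,
        MinusLE T (adjoint (A ∘L X ∘L B - 1) ∘L (W ∘L (A ∘L X ∘L B - 1)))) ∧
      ∀ D : H →L[ℂ] H,
        (∀ X : H →L[ℂ] H,
          MinusLE D (adjoint (A ∘L X ∘L B - 1) ∘L (W ∘L (A ∘L X ∘L B - 1)))) →
        MinusLE D T := by
  obtain ⟨R, hR, hRT, hWR⟩ := hcomp
  have hTW : T = W ∘L (1 - R) := hT.eq_comp_one_sub hW hR hRT hWR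
  have hAT : adjoint A ∘L T = 0 := adjoint_comp_eq_zero_of_range_le hT.range_le
  have hBR : B ∘L (1 - R) = 0 := by
    ext x
    refine hker.ge (LinearMap.mem_ker.2 ?_)
    change adjoint A ((W ∘L (1 - R)) x) = 0
    rw [← hTW, ← comp_apply, hAT, zero_apply]
  have hE (X : H →L[ℂ] H) := isSelfAdjoint_weightedResidual (A := A) (B := B) hW.isSelfAdjoint X
  refine ⟨minusLE_weightedResidual hW.isSelfAdjoint hT.isSelfAdjoint hR hBR hAT hTW, fun D hD => ?_⟩
  obtain ⟨P, hP, hDP⟩ := exists_eq_comp_of_forall_minusLE hW hker.le hT hRT.le hTW hD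
  obtain ⟨Q, hQ, hDQ⟩ := exists_eq_comp_of_forall_minusLE hW hker.le hT hRT.le hTW
    (D := adjoint D) fun X => (hE X).adjoint_eq ▸ (hD X).adjoint
  exact ⟨P, Q, hP, hQ, hDP, hT.isSelfAdjoint.adjoint_eq.symm ▸ hDQ⟩

/-- if `(W, ker T)` is compatible and `range A + W⁻¹((range A)^⊥)` is closed,
then `T` is the minus-order infimum of `{(AXB - I)* W (AXB - I)}`. -/
theorem stmt8 (W A B T : H →L[ℂ] H) (hW : W.IsPositive)
    (hA : IsClosed (LinearMap.range (A : H →ₗ[ℂ] H) : Set H)) (hB : IsClosed (LinearMap.range (B : H →ₗ[ℂ] H) : Set H))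
    (hker : LinearMap.ker (B : H →ₗ[ℂ] H) = LinearMap.ker (adjoint A ∘L W : H →ₗ[ℂ] H))
    (hT : IsShorted W (LinearMap.range (A : H →ₗ[ℂ] H)) T)
    (hcomp : Compatible W (LinearMap.ker (T : H →ₗ[ℂ] H)))
    (hclosed : IsClosed
      ((LinearMap.range (A : H →ₗ[ℂ] H) ⊔ Submodule.comap (W : H →ₗ[ℂ] H) (LinearMap.range (A : H →ₗ[ℂ] H))ᗮ : Submodule ℂ H) : Set H)) :
    (∀ X : H →L[ℂ] H,
        MinusLE T (adjoint (A ∘L X ∘L B - 1) ∘L (W ∘L (A ∘L X ∘L B - 1)))) ∧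
      ∀ D : H →L[ℂ] H,
        (∀ X : H →L[ℂ] H,
          MinusLE D (adjoint (A ∘L X ∘L B - 1) ∘L (W ∘L (A ∘L X ∘L B - 1)))) →
        MinusLE D T :=
  stmt8_general W A B T hW hker hT hcomp
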